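/- Let n and m be integers with 3 ≤ m ≤ ⌊n/2⌋, and let B⁽¹⁾_{n,m} and B⁽²⁾_{n,m} be the two extremal orientations of B_{n,m}. Then M₁(B⁽¹⁾_{n,m}) = M₁(B⁽²⁾_{n,m}) = (1/2)[m² − m(1 + 2n) + n² + 5n + 2]. -/

import Mathlib

/-!
Each vertex `u` contributes `d⁺_u` to the Zagreb sum once for each of its `d⁺_u` out-arcs, and
`d⁻_u` once for each of its `d⁻_u` in-arcs, so `M₁(D) = (∑ (d⁺_u)² + ∑ (d⁻_u)²) / 2`. Reversing all
arcs swaps the two sums, hence `M₁(B⁽²⁾) = M₁(B⁽¹⁾)`. In `B⁽¹⁾` the centre has out-degree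
`n - m + 2`, two triangle vertices and the `m - 3` path ends have out-degree 1; two triangle vertices
and the `m - 3` path midpoints have in-degree 2, and the other two triangle vertices and the
`n - 2m + 1` pendent vertices have in-degree 1. The squares add up to `(n - m + 2)² + m - 1` and
`n + 2m - 1`.
-/

open Finset

attribute [local instance] Classical.propDecidable

/-- The out-degree of `u` in the digraph on `V` with arc relation `A`. -/
noncomputable def outDeg {V : Type*} [Fintype V] (A : V → V → Prop) (u : V) : ℕ :=
  (Finset.univ.filter fun v => A u v).card

/-- The in-degree of `u` in the digraph on `V` with arc relation `A`. -/
noncomputable def inDeg {V : Type*} [Fintype V] (A : V → V → Prop) (u : V) : ℕ :=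
  (Finset.univ.filter fun v => A v u).card

/-- The first Zagreb index of a digraph: `(1/2) · ∑_{uv ∈ A} (d⁺_u + d⁻_v)`. -/
noncomputable def M1D {V : Type*} [Fintype V] (A : V → V → Prop) : ℚ :=
  (1 / 2) * ∑ u : V, ∑ v : V, if A u v then ((outDeg A u : ℚ) + (inDeg A v : ℚ)) else 0

/-- `A` is an orientation of the simple graph `G`: every edge of `G` is replaced by
exactly one of the two possible arcs. -/
def IsOrientation {V : Type*} (G : SimpleGraph V) (A : V → V → Prop) : Prop :=
  (∀ u v, G.Adj u v ↔ (A u v ∨ A v u)) ∧ ∀ u v, ¬(A u v ∧ A v u)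

/-- A sink-source orientation: every vertex has out-degree 0 or in-degree 0. -/
def IsSinkSource {V : Type*} [Fintype V] (A : V → V → Prop) : Prop :=
  ∀ u, outDeg A u = 0 ∨ inDeg A u = 0

/-- The first Zagreb index of a simple graph: `∑_{uv ∈ E(G)} (d_G(u) + d_G(v))`. -/
noncomputable def M1G {V : Type*} [Fintype V] (G : SimpleGraph V) : ℕ :=
  ∑ e ∈ G.edgeFinset,
    Sym2.lift ⟨fun u v => G.degree u + G.degree v, fun _ _ => Nat.add_comm _ _⟩ e

/-- The arcs of the extremal orientation `B⁽¹⁾_{n,m}` (on vertex labels in `ℕ`).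
Vertex `0` is the common center of the two triangles `{0,1,2}` and `{0,3,4}`;
the `n - 2m + 1` pendent vertices are `5, …, n - 2m + 5`; the `m - 3` attached paths
of length two are `0 — (n-2m+6+2k) — (n-2m+6+2k+1)` for `0 ≤ k ≤ m - 4`.
The center `0` is a source, each triangle `0ab` is oriented `0→a`, `0→b`, `a→b`,
every pendent arc leaves `0`, and on each attached path the middle vertex is a sink,
i.e. the arcs are `0 → mid` and `end → mid`. -/
def B1Rel (n m : ℕ) (i j : ℕ) : Prop :=
  (i = 0 ∧ j = 1) ∨ (i = 0 ∧ j = 2) ∨ (i = 1 ∧ j = 2) ∨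
  (i = 0 ∧ j = 3) ∨ (i = 0 ∧ j = 4) ∨ (i = 3 ∧ j = 4) ∨
  (i = 0 ∧ 5 ≤ j ∧ j < n - 2 * m + 6) ∨
  (i = 0 ∧ n - 2 * m + 6 ≤ j ∧ j < n ∧ (j - (n - 2 * m + 6)) % 2 = 0) ∨
  (n - 2 * m + 6 ≤ j ∧ j < n ∧ (j - (n - 2 * m + 6)) % 2 = 0 ∧ i = j + 1 ∧ i < n)

/-- The bicyclic graph `B_{n,m}`: two triangles sharing a common center vertex, with
`n - 2m + 1` pendent edges and `m - 3` paths of length two attached to the center. -/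
def Bnm (n m : ℕ) : SimpleGraph (Fin n) :=
  SimpleGraph.fromRel fun i j => B1Rel n m (i : ℕ) (j : ℕ)

/-- The extremal orientation `B⁽¹⁾_{n,m}` of `B_{n,m}`, in which the center is a source. -/
def B1 (n m : ℕ) : Fin n → Fin n → Prop := fun i j => B1Rel n m (i : ℕ) (j : ℕ)

/-- The extremal orientation `B⁽²⁾_{n,m}` of `B_{n,m}`: the reverse of `B⁽¹⁾_{n,m}`,
in which the center is a sink. -/
def B2 (n m : ℕ) : Fin n → Fin n → Prop := fun i j => B1Rel n m (j : ℕ) (i : ℕ)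

section Zagreb

variable {V : Type*} [Fintype V]

theorem M1D_eq_sum_sq (A : V → V → Prop) :
    M1D A = (∑ u, (outDeg A u : ℚ) ^ 2 + ∑ v, (inDeg A v : ℚ) ^ 2) / 2 := by
  have hout : ∀ u, ∑ v, (if A u v then (outDeg A u : ℚ) else 0) = (outDeg A u : ℚ) ^ 2 := by
    intro u
    rw [← sum_filter, sum_const, nsmul_eq_mul, outDeg, sq]
  have hin : ∀ v, ∑ u, (if A u v then (inDeg A v : ℚ) else 0) = (inDeg A v : ℚ) ^ 2 := by
    intro v
    rw [← sum_filter, sum_const, nsmul_eq_mul, inDeg, sq]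
  simp only [M1D, ite_add_zero, sum_add_distrib, hout]
  rw [sum_comm (f := fun u v => if A u v then (inDeg A v : ℚ) else 0)]
  simp only [hin]
  ring

theorem M1D_flip (A : V → V → Prop) : M1D (flip A) = M1D A := by
  rw [M1D_eq_sum_sq, M1D_eq_sum_sq, add_comm]
  rfl

end Zagreb

theorem card_filter_fin_eq_card_filter_range (n : ℕ) (p : ℕ → Prop) :
    (univ.filter fun i : Fin n => p i).card = ((range n).filter p).card := by
  rw [← Nat.Iio_eq_range, ← Fin.map_valEmbedding_univ, Finset.filter_map, card_map]
  rfl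

theorem card_filter_Ico_sub_mod_two {t q n : ℕ} (hn : t + 2 * q = n) :
    ((Ico t n).filter fun j => (j - t) % 2 = 0).card = q := by
  subst hn
  have h : (Ico t (t + 2 * q)).filter (fun j => (j - t) % 2 = 0)
      = (range q).image (fun k => t + 2 * k) := by
    ext j
    simp only [mem_filter, mem_Ico, mem_range, mem_image]
    constructor
    · rintro ⟨hj, heven⟩
      exact ⟨(j - t) / 2, by omega, by omega⟩
    · rintro ⟨k, hk, rfl⟩
      omega
  rw [h, card_image_of_injective _ fun x y hxy => by omega, card_range]

theorem sum_Ico_sub_mod_two (f : ℕ → ℚ) (t q : ℕ) :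
    ∑ i ∈ Ico t (t + 2 * q), f ((i - t) % 2) = q * (f 0 + f 1) := by
  simp only [sum_Ico_eq_sum_range, Nat.add_sub_cancel_left]
  induction q with
  | zero => simp
  | succ q ih =>
    rw [show 2 * (q + 1) = 2 * q + 1 + 1 by ring, sum_range_succ, sum_range_succ, ih,
      show 2 * q % 2 = 0 by omega, show (2 * q + 1) % 2 = 1 by omega]
    push_cast
    ring

def b1OutDeg (n m i : ℕ) : ℕ :=
  if i = 0 then n - m + 2
  else if i = 1 ∨ i = 3 then 1
  else if i < n - 2 * m + 6 then 0
  else if (i - (n - 2 * m + 6)) % 2 = 0 then 0 else 1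

def b1InDeg (n m i : ℕ) : ℕ :=
  if i = 0 then 0
  else if i = 2 ∨ i = 4 then 2
  else if i < n - 2 * m + 6 then 1
  else if (i - (n - 2 * m + 6)) % 2 = 0 then 2 else 0

section B1

variable {n m : ℕ}

theorem card_filter_B1Rel_left (hm : 3 ≤ m) (hmn : 2 * m ≤ n) {i : ℕ} (hi : i < n) :
    ((range n).filter (B1Rel n m i)).card = b1OutDeg n m i := by
  unfold b1OutDeg
  split_ifs with hcenter htri hpend hmid
  · subst hcenter
    have hnbhd : (range n).filter (B1Rel n m 0) = Ico 1 (n - 2 * m + 6) ∪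
        (Ico (n - 2 * m + 6) n).filter fun j => (j - (n - 2 * m + 6)) % 2 = 0 := by
      ext j
      simp only [mem_filter, mem_range, mem_union, mem_Ico, B1Rel, true_and]
      omega
    rw [hnbhd, card_union_of_disjoint, Nat.card_Ico, card_filter_Ico_sub_mod_two (q := m - 3)]
    · omega
    · omega
    · exact disjoint_left.2 fun j hj hj' => by simp only [mem_Ico, mem_filter] at hj hj'; omega
  · refine card_eq_one.2 ⟨i + 1, ?_⟩
    ext j
    simp only [mem_filter, mem_range, mem_singleton, B1Rel, hcenter, false_and, false_or]
    omega
  · refine card_eq_zero.2 (filter_eq_empty_iff.2 fun j _ => ?_)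
    simp only [B1Rel, hcenter, false_and, false_or]
    omega
  · refine card_eq_zero.2 (filter_eq_empty_iff.2 fun j _ => ?_)
    simp only [B1Rel, hcenter, false_and, false_or]
    omega
  · refine card_eq_one.2 ⟨i - 1, ?_⟩
    ext j
    simp only [mem_filter, mem_range, mem_singleton, B1Rel, hcenter, false_and, false_or]
    omega

theorem card_filter_B1Rel_right (hm : 3 ≤ m) (hmn : 2 * m ≤ n) {i : ℕ} (hi : i < n) :
    ((range n).filter fun j => B1Rel n m j i).card = b1InDeg n m i := by
  unfold b1InDeg
  split_ifs with hcenter htri hpend hmid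
  · refine card_eq_zero.2 (filter_eq_empty_iff.2 fun j _ => ?_)
    simp only [B1Rel]
    omega
  · refine card_eq_two.2 ⟨0, i - 1, by omega, ?_⟩
    ext j
    simp only [mem_filter, mem_range, mem_insert, mem_singleton]
    simp only [B1Rel]
    rcases htri with rfl | rfl <;> omega
  · refine card_eq_one.2 ⟨0, ?_⟩
    ext j
    simp only [mem_filter, mem_range, mem_singleton]
    simp only [B1Rel]
    omega
  · refine card_eq_two.2 ⟨0, i + 1, by omega, ?_⟩
    ext j
    simp only [mem_filter, mem_range, mem_insert, mem_singleton]
    simp only [B1Rel]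
    clear hcenter htri
    omega
  · refine card_eq_zero.2 (filter_eq_empty_iff.2 fun j _ => ?_)
    simp only [B1Rel]
    omega

theorem sum_range_eq_of_B1_profile (hm : 3 ≤ m) (hmn : 2 * m ≤ n) (f g : ℕ → ℚ) (c : ℚ)
    (hpend : ∀ i, 5 ≤ i → i < n - 2 * m + 6 → f i = c)
    (hpath : ∀ i, n - 2 * m + 6 ≤ i → f i = g ((i - (n - 2 * m + 6)) % 2)) :
    ∑ i ∈ range n, f i = f 0 + f 1 + f 2 + f 3 + f 4
      + ((n - 2 * m + 1 : ℕ) : ℚ) * c + ((m - 3 : ℕ) : ℚ) * (g 0 + g 1) := by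
  set t := n - 2 * m + 6
  have hpendent : ∑ i ∈ Ico 5 t, f i = ((n - 2 * m + 1 : ℕ) : ℚ) * c := by
    rw [sum_congr rfl fun i hi => hpend i (mem_Ico.1 hi).1 (mem_Ico.1 hi).2, sum_const,
      Nat.card_Ico, nsmul_eq_mul, show t - 5 = n - 2 * m + 1 by omega]
  have hpaths : ∑ i ∈ Ico t n, f i = ((m - 3 : ℕ) : ℚ) * (g 0 + g 1) := by
    rw [show n = t + 2 * (m - 3) by omega, sum_congr rfl fun i hi => hpath i (mem_Ico.1 hi).1,
      sum_Ico_sub_mod_two]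
  rw [← sum_range_add_sum_Ico f (show t ≤ n by omega),
    ← sum_range_add_sum_Ico f (show 5 ≤ t by omega), hpendent, hpaths]
  simp only [sum_range_succ, sum_range_zero, zero_add]

theorem sum_sq_b1OutDeg (hm : 3 ≤ m) (hmn : 2 * m ≤ n) :
    ∑ i ∈ range n, (b1OutDeg n m i : ℚ) ^ 2 = ((n : ℚ) - m + 2) ^ 2 + m - 1 := by
  rw [sum_range_eq_of_B1_profile hm hmn _ (fun r => if r = 0 then 0 else 1) 0]
  · simp only [b1OutDeg]
    push_cast [Nat.cast_sub (by omega : m ≤ n), Nat.cast_sub (by omega : 2 * m ≤ n),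
      Nat.cast_sub hm]
    norm_num
    ring
  · intro i h5 ht
    simp only [b1OutDeg]
    split_ifs <;> first | omega | norm_num
  · intro i ht
    simp only [b1OutDeg]
    split_ifs <;> first | omega | norm_num

theorem sum_sq_b1InDeg (hm : 3 ≤ m) (hmn : 2 * m ≤ n) :
    ∑ i ∈ range n, (b1InDeg n m i : ℚ) ^ 2 = n + 2 * m - 1 := by
  rw [sum_range_eq_of_B1_profile hm hmn _ (fun r => if r = 0 then 4 else 0) 1]
  · simp only [b1InDeg]
    push_cast [Nat.cast_sub (by omega : 2 * m ≤ n), Nat.cast_sub hm]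
    norm_num
    ring
  · intro i h5 ht
    simp only [b1InDeg]
    split_ifs <;> first | omega | norm_num
  · intro i ht
    simp only [b1InDeg]
    split_ifs <;> first | omega | norm_num

theorem outDeg_B1 (hm : 3 ≤ m) (hmn : 2 * m ≤ n) (i : Fin n) :
    outDeg (B1 n m) i = b1OutDeg n m i :=
  (card_filter_fin_eq_card_filter_range n (B1Rel n m i)).trans (card_filter_B1Rel_left hm hmn i.isLt)

theorem inDeg_B1 (hm : 3 ≤ m) (hmn : 2 * m ≤ n) (i : Fin n) :
    inDeg (B1 n m) i = b1InDeg n m i :=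
  (card_filter_fin_eq_card_filter_range n (fun j => B1Rel n m j i)).trans (card_filter_B1Rel_right hm hmn i.isLt)

end B1

theorem stmt11 (n m : ℕ) (hm : 3 ≤ m) (hmn : m ≤ n / 2) :
    M1D (B1 n m) = ((m : ℚ) ^ 2 - m * (1 + 2 * n) + n ^ 2 + 5 * n + 2) / 2 ∧
    M1D (B2 n m) = ((m : ℚ) ^ 2 - m * (1 + 2 * n) + n ^ 2 + 5 * n + 2) / 2 := by
  have h2m : 2 * m ≤ n := by omega
  have hB1 : M1D (B1 n m) = ((m : ℚ) ^ 2 - m * (1 + 2 * n) + n ^ 2 + 5 * n + 2) / 2 := by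
    rw [M1D_eq_sum_sq]
    simp only [outDeg_B1 hm h2m, inDeg_B1 hm h2m]
    rw [Fin.sum_univ_eq_sum_range (fun i => (b1OutDeg n m i : ℚ) ^ 2),
      Fin.sum_univ_eq_sum_range (fun i => (b1InDeg n m i : ℚ) ^ 2),
      sum_sq_b1OutDeg hm h2m, sum_sq_b1InDeg hm h2m]
    ring
  exact ⟨hB1, (M1D_flip (B1 n m)).trans hB1⟩
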